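/- arXiv:1608.03742 — 3 statements merged into one kernel-verified Lean document; each statement's English description precedes it below -/
import Mathlib

section
/- The function f : [1, ∞) → [0, 1) defined by f(λ) = (λ⁴ - 4·ln(λ)·λ² - 1)/(λ⁴ - 2λ² + 1) for λ > 1 and f(1) = 0 is strictly monotone increasing on [1, ∞). -/
/-!
In the variable `t = λ²` the function becomes `(t² - 2 t ln t - 1) / (t - 1)²`. Its numerator is
positive for `t > 1` because `2 ln t < t - 1/t`, and its derivative
`2 ((t + 1) ln t - 2 (t - 1)) / (t - 1)³` is positive because `ln t > 2 (t - 1) / (t + 1)`.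
Both logarithmic inequalities hold at `t = 1` with equality, and the difference of their two
sides has positive derivative on `t > 1` by `ln t < t - 1` (applied at `t` and at `1/t`).
-/

open Real Set

lemma strictMonoOn_Ici_of_hasDerivAt_pos {g g' : ℝ → ℝ} {a : ℝ} (hg : ContinuousOn g (Ici a))
    (hderiv : ∀ x, a < x → HasDerivAt g (g' x) x) (hpos : ∀ x, a < x → 0 < g' x) :
    StrictMonoOn g (Ici a) := by
  refine strictMonoOn_of_hasDerivWithinAt_pos (f' := g') (convex_Ici a) hg
    (fun x hx ↦ ?_) fun x hx ↦ ?_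
  · rw [interior_Ici] at hx ⊢
    exact (hderiv x hx).hasDerivWithinAt
  · rw [interior_Ici] at hx
    exact hpos x hx

lemma two_mul_mul_log_lt_sq_sub_one {t : ℝ} (ht : 1 < t) : 2 * t * log t < t ^ 2 - 1 := by
  have hmono : StrictMonoOn (fun s ↦ s ^ 2 - 1 - 2 * (s * log s)) (Ici 1) := by
    refine strictMonoOn_Ici_of_hasDerivAt_pos (g' := fun s ↦ 2 * s - 2 * (log s + 1))
      (by fun_prop) (fun s hs ↦ ?_) fun s hs ↦ ?_
    · simpa using ((hasDerivAt_pow 2 s).sub_const 1).fun_sub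
        ((hasDerivAt_mul_log (by positivity)).const_mul 2)
    · linarith [log_lt_sub_one_of_pos (by positivity) hs.ne']
  have := hmono self_mem_Ici ht.le ht
  simp only [one_pow, sub_self, log_one, mul_zero, sub_pos] at this
  linarith

lemma two_mul_sub_one_lt_add_one_mul_log {t : ℝ} (ht : 1 < t) :
    2 * (t - 1) < (t + 1) * log t := by
  have hmono : StrictMonoOn (fun s ↦ s * log s + log s - 2 * (s - 1)) (Ici 1) := by
    refine strictMonoOn_Ici_of_hasDerivAt_pos (g' := fun s ↦ log s + 1 + s⁻¹ - 2 * 1)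
      (by fun_prop (disch := exact fun x hx ↦ (zero_lt_one.trans_le hx).ne')) (fun s hs ↦ ?_) fun s hs ↦ ?_
    · exact ((hasDerivAt_mul_log (by positivity)).add (hasDerivAt_log (by positivity))).sub
        (((hasDerivAt_id s).sub_const 1).const_mul 2)
    · have := log_lt_sub_one_of_pos (inv_pos.2 (by positivity)) (inv_ne_one.2 hs.ne')
      rw [log_inv] at this
      linarith
  have := hmono self_mem_Ici ht.le ht
  simp only [log_one, mul_zero, add_zero, sub_self, sub_pos] at this
  linarith

-- `f λ = fOfSq (λ ^ 2)` for `λ > 1`.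
noncomputable def fOfSq (t : ℝ) : ℝ := (t ^ 2 - 2 * t * log t - 1) / (t - 1) ^ 2

lemma fOfSq_pos {t : ℝ} (ht : 1 < t) : 0 < fOfSq t :=
  div_pos (by linarith [two_mul_mul_log_lt_sq_sub_one ht]) (by nlinarith)

lemma hasDerivAt_fOfSq {t : ℝ} (ht : 1 < t) :
    HasDerivAt fOfSq (2 * ((t + 1) * log t - 2 * (t - 1)) / (t - 1) ^ 3) t := by
  have hnum : HasDerivAt (fun s ↦ s ^ 2 - 2 * s * log s - 1) (2 * t - 2 * (log t + 1)) t := by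
    simpa [mul_assoc] using (((hasDerivAt_pow 2 t).fun_sub
      ((hasDerivAt_mul_log (by positivity)).const_mul 2)).sub_const 1)
  have hden : HasDerivAt (fun s ↦ (s - 1) ^ 2) (2 * (t - 1)) t := by
    simpa using ((hasDerivAt_id t).sub_const 1).fun_pow 2
  have ht1 : t - 1 ≠ 0 := sub_ne_zero.2 ht.ne'
  refine (hnum.fun_div hden (pow_ne_zero 2 ht1)).congr_deriv ?_
  rw [div_eq_div_iff (by positivity) (by positivity)]
  ring

lemma strictMonoOn_fOfSq : StrictMonoOn fOfSq (Ioi 1) := by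
  refine strictMonoOn_of_hasDerivWithinAt_pos (convex_Ioi 1)
    (f' := fun t ↦ 2 * ((t + 1) * log t - 2 * (t - 1)) / (t - 1) ^ 3)
    (fun t ht ↦ (hasDerivAt_fOfSq ht).continuousAt.continuousWithinAt)
    (fun t ht ↦ ?_) fun t ht ↦ ?_ <;> rw [interior_Ioi] at ht
  · exact (hasDerivAt_fOfSq ht).hasDerivWithinAt
  · have := two_mul_sub_one_lt_add_one_mul_log ht
    have : 0 < t - 1 := sub_pos.2 ht
    positivity

lemma quartic_div_eq_fOfSq (l : ℝ) :
    (l ^ 4 - 4 * log l * l ^ 2 - 1) / (l ^ 4 - 2 * l ^ 2 + 1) = fOfSq (l ^ 2) := by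
  rw [fOfSq, log_pow]
  congr 1 <;> ring

/-- The function `f : [1,∞) → [0,1)` defined by
`f(λ) = (λ⁴ - 4 ln(λ) λ² - 1)/(λ⁴ - 2λ² + 1)` for `λ > 1` and `f(1) = 0`
is strictly monotone increasing on `[1,∞)`. -/
theorem stmt_0 (f : ℝ → ℝ)
    (hf : ∀ l : ℝ, 1 < l →
      f l = (l ^ 4 - 4 * Real.log l * l ^ 2 - 1) / (l ^ 4 - 2 * l ^ 2 + 1))
    (hf1 : f 1 = 0) :
    StrictMonoOn f (Set.Ici 1) := by
  intro x hx y _ hxy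
  have hy1 : 1 < y := lt_of_le_of_lt hx hxy
  rw [hf y hy1, quartic_div_eq_fOfSq]
  rcases (mem_Ici.1 hx).eq_or_lt with rfl | hx1
  · rw [hf1]
    exact fOfSq_pos (one_lt_pow₀ hy1 two_ne_zero)
  · rw [hf x hx1, quartic_div_eq_fOfSq]
    exact strictMonoOn_fOfSq (one_lt_pow₀ hx1 two_ne_zero) (one_lt_pow₀ hy1 two_ne_zero)
      (pow_lt_pow_left₀ hxy (by linarith) two_ne_zero)
end

section
/- Let K : ℝ → ℝ be defined by K(λ) = |(1 + 4·ln(λ)·λ² - λ⁴)/(λ⁴ - 2λ² + 1)| for λ > 1 (with K(1) := 0 by continuity). Then K is a bijection from [1, ∞) onto [0, 1), and in particular for every c ∈ [0, 1) there exists a unique λ ≥ 1 with K(λ) = c. -/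
/-!
For `λ > 1`, `K(λ) = κ(λ) := (λ⁴ - 4 λ² log λ - 1) / (λ² - 1)²`, whose derivative
`8 λ ((λ² + 1) log λ - (λ² - 1)) / (λ² - 1)³` is positive by the series bound
`log t > 2 (t - 1) / (t + 1)` at `t = λ²`. The bounds `log λ ≤ sinh (log λ)` and
`log λ ≤ λ - 1` squeeze `κ` between `0` and `(λ² - 1) / (λ² + 1)` near `1`, and between
`1 - 4 / (λ + 1)` and `1` near `∞`. So `κ` is continuous and strictly increasing on `[1, ∞)`, tends
to `1`, and by the intermediate value theorem maps `[1, ∞)` bijectively onto `[κ 1, 1) = [0, 1)`.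
-/

open Real Set Filter Topology

-- The leading term of `log x = ∑ 2 y ^ (2k+1) / (2k+1)`, `y = (x - 1) / (x + 1)`.
theorem Real.two_mul_sub_one_div_add_one_lt_log {x : ℝ} (hx : 1 < x) :
    2 * (x - 1) / (x + 1) < log x := by
  have hsum := hasSum_log_one_add (a := x - 1) (by linarith)
  rw [add_sub_cancel, show x - 1 + 2 = x + 1 by ring] at hsum
  have hy : 0 < (x - 1) / (x + 1) := div_pos (by linarith) (by linarith)
  have h := sum_le_hasSum (Finset.range 2) (fun k _ => by positivity) hsum
  norm_num [Finset.sum_range_succ] at h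
  have : 0 < ((x - 1) / (x + 1)) ^ 3 := by positivity
  rw [mul_div_assoc]
  linarith

theorem Real.log_le_sub_inv_div_two {x : ℝ} (hx : 1 ≤ x) : log x ≤ (x - x⁻¹) / 2 := by
  rw [← sinh_log (by linarith)]
  exact self_le_sinh_iff.mpr (log_nonneg hx)

theorem sq_sub_one_lt_sq_add_one_mul_log {l : ℝ} (hl : 1 < l) :
    l ^ 2 - 1 < (l ^ 2 + 1) * log l := by
  have h := two_mul_sub_one_div_add_one_lt_log (one_lt_pow₀ hl two_ne_zero)
  rw [log_pow, div_lt_iff₀ (by positivity)] at h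
  push_cast at h
  linarith

theorem StrictMonoOn.bijOn_Ici_Ico_of_tendsto_atTop
    {α β : Type*} [ConditionallyCompleteLinearOrder α] [TopologicalSpace α] [OrderTopology α]
    [DenselyOrdered α] [NoMaxOrder α] [LinearOrder β] [TopologicalSpace β]
    [OrderClosedTopology β] {f : α → β} {a : α} {M : β}
    (hmono : StrictMonoOn f (Ici a)) (hcont : ContinuousOn f (Ici a))
    (hlim : Tendsto f atTop (𝓝 M)) : BijOn f (Ici a) (Ico (f a) M) := by
  refine ⟨fun x hx => ⟨hmono.monotoneOn self_mem_Ici hx hx, ?_⟩, hmono.injOn, fun c hc => ?_⟩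
  · obtain ⟨y, hxy⟩ := exists_gt x
    have hyM : f y ≤ M := ge_of_tendsto hlim <| (eventually_ge_atTop y).mono fun z hz =>
      hmono.monotoneOn (hx.trans hxy.le) (hx.trans (hxy.le.trans hz)) hz
    exact (hmono hx (hx.trans hxy.le) hxy).trans_le hyM
  · obtain ⟨b, hab, hcb⟩ :=
      ((eventually_ge_atTop a).and (hlim.eventually_const_lt hc.2)).exists
    obtain ⟨x, hx, rfl⟩ :=
      intermediate_value_Icc hab (hcont.mono Icc_subset_Ici_self) ⟨hc.1, hcb.le⟩
    exact ⟨x, hx.1, rfl⟩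

theorem Set.BijOn.existsUnique_mem {α β : Type*} {f : α → β} {s : Set α} {t : Set β}
    (h : BijOn f s t) {y : β} (hy : y ∈ t) : ∃! x, x ∈ s ∧ f x = y := by
  obtain ⟨x, hx, rfl⟩ := h.surjOn hy
  exact ⟨x, ⟨hx, rfl⟩, fun x' hx' => h.injOn hx'.1 hx hx'.2⟩

-- At `l = 1` the junk value `0 / 0 = 0` is the value `K 1 = 0` of the statement.
noncomputable def kappa (l : ℝ) : ℝ := (l ^ 4 - 4 * log l * l ^ 2 - 1) / (l ^ 2 - 1) ^ 2

theorem kappa_one : kappa 1 = 0 := by simp [kappa]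

theorem kappa_nonneg {l : ℝ} (hl : 1 ≤ l) : 0 ≤ kappa l := by
  have hlog := log_le_sub_inv_div_two hl
  have hl0 : 0 < l := by linarith
  have hnum : 4 * log l * l ^ 2 ≤ 2 * l * (l ^ 2 - 1) :=
    calc 4 * log l * l ^ 2 ≤ 4 * ((l - l⁻¹) / 2) * l ^ 2 := by gcongr
      _ = 2 * l * (l ^ 2 - 1) := by field_simp; ring
  have hfactor : 0 ≤ (l ^ 2 - 1) * (l - 1) ^ 2 := mul_nonneg (by nlinarith) (sq_nonneg _)
  exact div_nonneg (by nlinarith) (sq_nonneg _)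

theorem kappa_le {l : ℝ} (hl : 1 < l) : kappa l ≤ (l ^ 2 - 1) / (l ^ 2 + 1) := by
  have hlog := sq_sub_one_lt_sq_add_one_mul_log hl
  have hD : 0 < l ^ 2 - 1 := by nlinarith
  rw [kappa, div_le_div_iff₀ (by positivity) (by positivity)]
  nlinarith [mul_le_mul_of_nonneg_left hlog.le (by positivity : (0 : ℝ) ≤ 4 * l ^ 2)]

theorem one_sub_four_div_le_kappa {l : ℝ} (hl : 1 < l) : 1 - 4 / (l + 1) ≤ kappa l := by
  have hlog := log_le_sub_one_of_pos (by linarith : 0 < l)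
  have hD : 0 < l ^ 2 - 1 := by nlinarith
  rw [kappa, le_div_iff₀ (by positivity)]
  have : (1 - 4 / (l + 1)) * (l ^ 2 - 1) ^ 2 = (l ^ 2 - 1) ^ 2 - 4 * (l - 1) ^ 2 * (l + 1) := by
    field_simp
    ring
  rw [this]
  nlinarith [sq_nonneg (l - 1)]

theorem hasDerivAt_kappa {l : ℝ} (hl : 1 < l) :
    HasDerivAt kappa (8 * l * ((l ^ 2 + 1) * log l - (l ^ 2 - 1)) / (l ^ 2 - 1) ^ 3) l := by
  have hl0 : l ≠ 0 := by positivity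
  have hD : l ^ 2 - 1 ≠ 0 := by nlinarith
  have hnum : HasDerivAt (fun x => x ^ 4 - 4 * log x * x ^ 2 - 1)
      (4 * l ^ 3 - 4 * l⁻¹ * l ^ 2 - 4 * log l * (2 * l)) l :=
    (((hasDerivAt_pow 4 l).sub (((hasDerivAt_log hl0).const_mul 4).mul
      (hasDerivAt_pow 2 l))).sub_const 1).congr_deriv (by norm_num; ring)
  have hden : HasDerivAt (fun x => (x ^ 2 - 1) ^ 2) (2 * (l ^ 2 - 1) * (2 * l)) l :=
    (((hasDerivAt_pow 2 l).sub_const 1).fun_pow 2).congr_deriv (by norm_num)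
  refine (hnum.div hden (pow_ne_zero 2 hD)).congr_deriv ?_
  field_simp
  ring

theorem continuousOn_kappa : ContinuousOn kappa (Ici 1) := by
  intro x hx
  rcases (mem_Ici.mp hx).eq_or_lt with rfl | hx
  · rw [← continuousWithinAt_Ioi_iff_Ici, ContinuousWithinAt, kappa_one]
    have hbound : Tendsto (fun l : ℝ => (l ^ 2 - 1) / (l ^ 2 + 1)) (𝓝[>] 1) (𝓝 0) := by
      have h : ContinuousAt (fun l : ℝ => (l ^ 2 - 1) / (l ^ 2 + 1)) 1 := by
        fun_prop (disch := norm_num)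
      simpa using h.tendsto.mono_left nhdsWithin_le_nhds
    exact tendsto_of_tendsto_of_tendsto_of_le_of_le' tendsto_const_nhds hbound
      (eventually_nhdsWithin_of_forall fun l hl => kappa_nonneg (le_of_lt hl))
      (eventually_nhdsWithin_of_forall fun l hl => kappa_le hl)
  · exact (hasDerivAt_kappa hx).continuousAt.continuousWithinAt

theorem strictMonoOn_kappa : StrictMonoOn kappa (Ici 1) := by
  refine strictMonoOn_of_deriv_pos (convex_Ici 1) continuousOn_kappa fun l hl => ?_
  rw [interior_Ici] at hl
  have hD : 0 < l ^ 2 - 1 := by nlinarith [mem_Ioi.mp hl]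
  rw [(hasDerivAt_kappa hl).deriv]
  exact div_pos (mul_pos (by linarith [mem_Ioi.mp hl])
    (sub_pos.mpr (sq_sub_one_lt_sq_add_one_mul_log hl))) (pow_pos hD 3)

theorem tendsto_kappa_atTop : Tendsto kappa atTop (𝓝 1) := by
  have hlow : Tendsto (fun l : ℝ => 1 - 4 / (l + 1)) atTop (𝓝 1) := by
    simpa using (tendsto_const_nhds (x := (1 : ℝ))).sub
      ((tendsto_const_nhds (x := (4 : ℝ))).div_atTop
        (tendsto_atTop_add_const_right atTop (1 : ℝ) tendsto_id))
  refine tendsto_of_tendsto_of_tendsto_of_le_of_le' hlow tendsto_const_nhds ?_ ?_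
  · filter_upwards [eventually_gt_atTop 1] with l hl using one_sub_four_div_le_kappa hl
  · filter_upwards [eventually_gt_atTop 1] with l hl
    exact (kappa_le hl).trans (div_le_one_of_le₀ (by linarith) (by positivity))

theorem bijOn_kappa : BijOn kappa (Ici 1) (Ico 0 1) := by
  simpa only [kappa_one] using
    strictMonoOn_kappa.bijOn_Ici_Ico_of_tendsto_atTop continuousOn_kappa tendsto_kappa_atTop

/-- Let `K(λ) = |(1 + 4 ln(λ) λ² - λ⁴)/(λ⁴ - 2λ² + 1)|` for `λ > 1`, with
`K(1) = 0`. Then `K` is a bijection from `[1,∞)` onto `[0,1)`, and in particular for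
every `c ∈ [0,1)` there exists a unique `λ ≥ 1` with `K(λ) = c`. -/
theorem stmt_9 (K : ℝ → ℝ)
    (hK : ∀ l : ℝ, 1 < l →
      K l = |(1 + 4 * Real.log l * l ^ 2 - l ^ 4) / (l ^ 4 - 2 * l ^ 2 + 1)|)
    (hK1 : K 1 = 0) :
    Set.BijOn K (Set.Ici 1) (Set.Ico 0 1) ∧
      ∀ c ∈ Set.Ico (0 : ℝ) 1, ∃! l : ℝ, 1 ≤ l ∧ K l = c := by
  have hK_eq : EqOn K kappa (Ici 1) := by
    intro l hl
    rcases (mem_Ici.mp hl).eq_or_lt with rfl | hl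
    · rw [hK1, kappa_one]
    · rw [hK l hl, show (1 + 4 * log l * l ^ 2 - l ^ 4) / (l ^ 4 - 2 * l ^ 2 + 1) = -kappa l by
        rw [kappa]; ring, abs_neg, abs_of_nonneg (kappa_nonneg hl.le)]
  have hbij := bijOn_kappa.congr hK_eq.symm
  exact ⟨hbij, fun c hc => hbij.existsUnique_mem hc⟩
end

section
/- Consider the hyperbolic metric in polar coordinates and a graph surface M = {(h̃(p), p) : p ∈ S²} over the unit sphere with graph function h̃. Then the squared norm of the gradient of h̃ on the round sphere satisfies |∇^σ h̃|²_σ ≤ (F/(1-F))·sinh(h̃)², where F = |X|²_ḡ is the squared norm of the tangential projection of the radial direction onto M; in particular if F ≤ 1/2 then |∇^σ h̃|²_σ ≤ 2F·sinh(h̃)². -/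
open scoped RealInnerProductSpace

/-! The normal `ν = (ν₀, νT)` is orthogonal to every graph tangent vector `(⟪∇h, w⟫, w)`, so the
tangent vector `ν₀ • ∇^σ h + sinh(h)² • νT` is orthogonal to the whole tangent plane of the sphere
and hence vanishes. Taking norms, `ν₀² |∇^σ h|² = sinh(h)⁴ |νT|² = sinh(h)² F` with `ν₀² = 1 - F`,
so the first bound even holds with equality. -/

section TangentPart

variable {E : Type*} [NormedAddCommGroup E] [InnerProductSpace ℝ E]

lemma inner_sub_inner_smul_self_eq_zero {p : E} (hp : ‖p‖ = 1) (v : E) :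
    ⟪v - ⟪v, p⟫ • p, p⟫ = 0 := by
  rw [inner_sub_left, real_inner_smul_left, real_inner_self_eq_norm_sq, hp]
  ring

lemma inner_sub_inner_smul_of_inner_eq_zero (v p : E) {w : E} (hw : ⟪w, p⟫ = 0) :
    ⟪v - ⟪v, p⟫ • p, w⟫ = ⟪v, w⟫ := by
  rw [inner_sub_left, real_inner_smul_left, real_inner_comm w p, hw, mul_zero, sub_zero]

lemma smul_eq_neg_smul_of_forall_inner_eq_zero {p t n : E} {a c : ℝ}
    (ht : ⟪t, p⟫ = 0) (hn : ⟪n, p⟫ = 0)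
    (horth : ∀ w : E, ⟪w, p⟫ = 0 → ⟪t, w⟫ * a + c * ⟪w, n⟫ = 0) :
    a • t = -c • n := by
  set u := a • t + c • n
  have hu : ⟪u, p⟫ = 0 := by
    rw [inner_add_left, real_inner_smul_left, real_inner_smul_left, ht, hn]
    ring
  have huu : ⟪u, u⟫ = 0 :=
    calc ⟪u, u⟫ = a * ⟪t, u⟫ + c * ⟪n, u⟫ := by
          rw [inner_add_left, real_inner_smul_left, real_inner_smul_left]
      _ = ⟪t, u⟫ * a + c * ⟪u, n⟫ := by rw [real_inner_comm n]; ring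
      _ = 0 := horth u hu
  rw [neg_smul, eq_neg_iff_add_eq_zero]
  exact inner_self_eq_zero.1 huu

lemma norm_sq_eq_div_one_sub_mul {t n : E} {a s F : ℝ} (hs : s ≠ 0)
    (hunit : a ^ 2 + s ^ 2 * ‖n‖ ^ 2 = 1) (htn : a • t = -(s ^ 2) • n) (hF : F = 1 - a ^ 2) :
    ‖t‖ ^ 2 = F / (1 - F) * s ^ 2 := by
  have hnorm : a ^ 2 * ‖t‖ ^ 2 = s ^ 4 * ‖n‖ ^ 2 := by
    have := congrArg (‖·‖ ^ 2) htn
    simp only [norm_smul, norm_neg, Real.norm_eq_abs, mul_pow, sq_abs] at this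
    linear_combination this
  have ha : a ≠ 0 := by
    rintro rfl
    have hn : ‖n‖ = 0 := by simpa [hs] using hnorm
    simp [hn] at hunit
  rw [hF, sub_sub_cancel, div_mul_eq_mul_div, eq_div_iff (pow_ne_zero 2 ha)]
  linear_combination hnorm + s ^ 2 * hunit

lemma div_one_sub_le_two_mul {F : ℝ} (hF₀ : 0 ≤ F) (hF : F ≤ 1 / 2) : F / (1 - F) ≤ 2 * F := by
  rw [div_le_iff₀ (by linarith)]
  nlinarith

end TangentPart

theorem stmt_19_general (p : EuclideanSpace ℝ (Fin 3)) (hp : ‖p‖ = 1)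
    (h : EuclideanSpace ℝ (Fin 3) → ℝ)
    (hpos : 0 < h p)
    (ν₀ : ℝ) (νT : EuclideanSpace ℝ (Fin 3)) (hνT : ⟪νT, p⟫ = 0)
    (hνunit : ν₀ ^ 2 + Real.sinh (h p) ^ 2 * ‖νT‖ ^ 2 = 1)
    (hνorth : ∀ w : EuclideanSpace ℝ (Fin 3), ⟪w, p⟫ = 0 →
      fderiv ℝ h p w * ν₀ + Real.sinh (h p) ^ 2 * ⟪w, νT⟫ = 0)
    (F : ℝ) (hF : F = 1 - ν₀ ^ 2) :
    ‖gradient h p - ⟪gradient h p, p⟫ • p‖ ^ 2 ≤ F / (1 - F) * Real.sinh (h p) ^ 2 ∧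
      (F ≤ 1 / 2 →
        ‖gradient h p - ⟪gradient h p, p⟫ • p‖ ^ 2 ≤ 2 * F * Real.sinh (h p) ^ 2) := by
  have hs : Real.sinh (h p) ≠ 0 := (Real.sinh_pos_iff.2 hpos).ne'
  have hrelation := smul_eq_neg_smul_of_forall_inner_eq_zero
    (inner_sub_inner_smul_self_eq_zero hp (gradient h p)) hνT fun w hw => by
      rw [inner_sub_inner_smul_of_inner_eq_zero _ _ hw, gradient,
        InnerProductSpace.toDual_symm_apply]
      exact hνorth w hw
  have hnorm := norm_sq_eq_div_one_sub_mul hs hνunit hrelation hF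
  have hF₀ : 0 ≤ F := by
    rw [hF, ← hνunit, add_sub_cancel_left]
    positivity
  refine ⟨hnorm.le, fun hF_le => hnorm ▸ ?_⟩
  exact mul_le_mul_of_nonneg_right (div_one_sub_le_two_mul hF₀ hF_le) (sq_nonneg _)

/-- Let `M = {(h̃(p), p) : p ∈ S²}` be a graph surface over the unit
sphere in hyperbolic polar coordinates `((0,∞) × S², dr² + sinh(r)²σ)`.  At a point
`p ∈ S²`, let `ν = (ν₀, νT)` be the hyperbolic unit normal of the graph (νT tangent to
the sphere, `ν₀² + sinh(h̃)²‖νT‖² = 1`, ν orthogonal to all graph tangent vectors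
`(dh̃(w), w)`), and let `F = |X|²_ḡ = 1 - ḡ(∂_r, ν)² = 1 - ν₀²` be the squared norm of
the tangential projection of the radial direction.  Then the round gradient of `h̃`
satisfies `|∇^σ h̃|²_σ ≤ (F/(1-F)) sinh(h̃)²`, and if `F ≤ 1/2` then
`|∇^σ h̃|²_σ ≤ 2F sinh(h̃)²`. -/
theorem stmt_19 (p : EuclideanSpace ℝ (Fin 3)) (hp : ‖p‖ = 1)
    (h : EuclideanSpace ℝ (Fin 3) → ℝ)
    (hdiff : DifferentiableAt ℝ h p) (hpos : 0 < h p)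
    (ν₀ : ℝ) (νT : EuclideanSpace ℝ (Fin 3)) (hνT : ⟪νT, p⟫ = 0)
    (hνunit : ν₀ ^ 2 + Real.sinh (h p) ^ 2 * ‖νT‖ ^ 2 = 1)
    (hνorth : ∀ w : EuclideanSpace ℝ (Fin 3), ⟪w, p⟫ = 0 →
      fderiv ℝ h p w * ν₀ + Real.sinh (h p) ^ 2 * ⟪w, νT⟫ = 0)
    (F : ℝ) (hF : F = 1 - ν₀ ^ 2) :
    ‖gradient h p - ⟪gradient h p, p⟫ • p‖ ^ 2 ≤ F / (1 - F) * Real.sinh (h p) ^ 2 ∧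
      (F ≤ 1 / 2 →
        ‖gradient h p - ⟪gradient h p, p⟫ • p‖ ^ 2 ≤ 2 * F * Real.sinh (h p) ^ 2) :=
  stmt_19_general p hp h hpos ν₀ νT hνT hνunit hνorth F hF
end
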